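/- arXiv:2401.14737 — 4 statements merged into one kernel-verified Lean document; each statement's English description precedes it below -/
import Mathlib

section
/- Let f : ℕ∞ → ℕ be the bijection with f(∞) = 0 and f(i) = i+1 for i ∈ ℕ, extended componentwise to vectors in ℕ∞^d and to sets of such vectors. Then for any set C ⊆ ℕ∞^d, the image f(C) ⊆ ℕ^d is semi-linear if and only if C is semi-linear. -/
/-! Common definitions: semi-linear sets, Parikh automata on finite and infinite words. -/

/-- The linear set with base vector `b` and finite set `P` of period vectors. -/
def LinSet {d : ℕ} {M : Type} [AddCommMonoid M] (b : Fin d → M)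
    (P : Finset (Fin d → M)) : Set (Fin d → M) :=
  {v | ∃ z : (Fin d → M) → ℕ, v = b + ∑ p ∈ P, z p • p}

/-- A set is semi-linear if it is a finite union of linear sets. -/
def SemiLin {d : ℕ} {M : Type} [AddCommMonoid M] (S : Set (Fin d → M)) : Prop :=
  ∃ (n : ℕ) (b : Fin n → Fin d → M) (P : Fin n → Finset (Fin d → M)),
    S = ⋃ i, LinSet (b i) (P i)

/-- The length-`n` prefix of an infinite word. -/
def pref {S : Type} (α : ℕ → S) (n : ℕ) : List S := List.ofFn fun i : Fin n => α i.1

/-- An infinite word is ultimately periodic if it has the form `u v^ω`. -/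
def UltimatelyPeriodic {S : Type} (α : ℕ → S) : Prop :=
  ∃ n p, 0 < p ∧ ∀ i, n ≤ i → α (i + p) = α i

/-- The finite infix `α[m+1 : n]` (0-indexed positions `m, …, n-1`). -/
def infixSeg {S : Type} (α : ℕ → S) (m n : ℕ) : List S :=
  List.ofFn fun j : Fin (n - m) => α (m + j.1)

/-- `W^ω`: infinite concatenations of non-empty words from `W`. -/
def omegaPow {S : Type} (W : Set (List S)) : Set (ℕ → S) :=
  {α | ∃ k : ℕ → ℕ, k 0 = 0 ∧ StrictMono k ∧ ∀ i, infixSeg α (k i) (k (i + 1)) ∈ W}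

/-- A deterministic Parikh automaton with states `Q`, alphabet `S`, dimension `d`,
and a constraint set `C` of vectors over `M` (`M = ℕ`, or `M = ℕ∞` for limit PA). -/
structure DetPA (Q S : Type) (d : ℕ) (M : Type) where
  init : Q
  trans : Q → S → (Fin d → ℕ) × Q
  acc : Q → Prop
  C : Set (Fin d → M)

namespace DetPA

variable {Q S M : Type} {d : ℕ}

/-- The run of `A` from state `p` on the infinite word `α`: state after `i` letters. -/
def run (A : DetPA Q S d M) (p : Q) (α : ℕ → S) : ℕ → Q
  | 0 => p
  | i + 1 => (A.trans (A.run p α i) (α i)).2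

/-- The state of the unique run of `A` on `α` after `i` letters. -/
def stateAt (A : DetPA Q S d M) (α : ℕ → S) : ℕ → Q := A.run A.init α

/-- The vector of the `i`-th transition of the unique run of `A` on `α`. -/
def step (A : DetPA Q S d M) (α : ℕ → S) (i : ℕ) : Fin d → ℕ :=
  (A.trans (A.stateAt α i) (α i)).1

/-- Sum of transition vectors of the run of `A` on `α` on positions `m, …, n-1`. -/
def vecSum (A : DetPA Q S d M) (α : ℕ → S) (m n : ℕ) : Fin d → ℕ :=
  ∑ i ∈ Finset.Ico m n, A.step α i

/-- The state reached when reading a finite word from state `p`. -/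
def runList (A : DetPA Q S d M) : Q → List S → Q
  | p, [] => p
  | p, a :: w => A.runList (A.trans p a).2 w

/-- The sum of transition vectors collected when reading a finite word from state `p`. -/
def sumList (A : DetPA Q S d M) : Q → List S → (Fin d → ℕ)
  | _, [] => 0
  | p, a :: w => (A.trans p a).1 + A.sumList (A.trans p a).2 w

/-- Finite-word acceptance: end in an accepting state with vector sum in `C`. -/
def AcceptsWord (A : DetPA Q S d ℕ) (w : List S) : Prop :=
  A.acc (A.runList A.init w) ∧ A.sumList A.init w ∈ A.C

/-- The run visits accepting states infinitely often. -/
def InfAcc (A : DetPA Q S d M) (α : ℕ → S) : Prop :=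
  ∀ n, ∃ i, n ≤ i ∧ A.acc (A.stateAt α i)

/-- Reachability condition. -/
def ReachAccept (A : DetPA Q S d ℕ) (α : ℕ → S) : Prop :=
  ∃ i, 1 ≤ i ∧ A.acc (A.stateAt α i) ∧ A.vecSum α 0 i ∈ A.C

/-- Reachability-regular condition. -/
def ReachRegAccept (A : DetPA Q S d ℕ) (α : ℕ → S) : Prop :=
  A.ReachAccept α ∧ A.InfAcc α

/-- Büchi condition. -/
def BuchiAccept (A : DetPA Q S d ℕ) (α : ℕ → S) : Prop :=
  ∀ n, ∃ i, n ≤ i ∧ 1 ≤ i ∧ A.acc (A.stateAt α i) ∧ A.vecSum α 0 i ∈ A.C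

/-- Weak reset condition. -/
def WeakResetAccept (A : DetPA Q S d ℕ) (α : ℕ → S) : Prop :=
  ∃ k : ℕ → ℕ, k 0 = 0 ∧ StrictMono k ∧
    (∀ i, A.acc (A.stateAt α (k (i + 1)))) ∧
    (∀ i, A.vecSum α (k i) (k (i + 1)) ∈ A.C)

/-- Strong reset condition: accepting states occur infinitely often, and between any
two consecutive accepting positions (and from position `0` to the first one) the
collected vector lies in `C`. -/
def StrongResetAccept (A : DetPA Q S d ℕ) (α : ℕ → S) : Prop :=
  (∀ n, ∃ i, n ≤ i ∧ 1 ≤ i ∧ A.acc (A.stateAt α i)) ∧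
  ∀ m n, m < n → (m = 0 ∨ (1 ≤ m ∧ A.acc (A.stateAt α m))) →
    A.acc (A.stateAt α n) →
    (∀ j, m < j → j < n → ¬ A.acc (A.stateAt α j)) →
    A.vecSum α m n ∈ A.C

/-- The extended Parikh image of the unique run of `A` on `α`: componentwise the
supremum in `ℕ∞` of the partial sums (`∞` iff the component is incremented
infinitely often, else the finite total sum). -/
noncomputable def limImage (A : DetPA Q S d M) (α : ℕ → S) : Fin d → ℕ∞ :=
  fun j => ⨆ n, (A.vecSum α 0 n j : ℕ∞)

/-- Limit condition. -/
def LimitAccept (A : DetPA Q S d ℕ∞) (α : ℕ → S) : Prop :=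
  A.InfAcc α ∧ A.limImage α ∈ A.C

end DetPA

/-- `U` is recognized by a deterministic finite-word Parikh automaton. -/
def DetPARecogFin {S : Type} (U : Set (List S)) : Prop :=
  ∃ (d : ℕ) (Q : Type) (_ : Finite Q) (A : DetPA Q S d ℕ),
    SemiLin A.C ∧ U = {w | A.AcceptsWord w}

/-- `L` is recognized by a deterministic reachability PA. -/
def DetReachRecog {S : Type} (L : Set (ℕ → S)) : Prop :=
  ∃ (d : ℕ) (Q : Type) (_ : Finite Q) (A : DetPA Q S d ℕ),
    SemiLin A.C ∧ L = {α | A.ReachAccept α}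

/-- `L` is recognized by a deterministic reachability-regular PA. -/
def DetReachRegRecog {S : Type} (L : Set (ℕ → S)) : Prop :=
  ∃ (d : ℕ) (Q : Type) (_ : Finite Q) (A : DetPA Q S d ℕ),
    SemiLin A.C ∧ L = {α | A.ReachRegAccept α}

/-- `L` is recognized by a deterministic Büchi PA. -/
def DetBuchiRecog {S : Type} (L : Set (ℕ → S)) : Prop :=
  ∃ (d : ℕ) (Q : Type) (_ : Finite Q) (A : DetPA Q S d ℕ),
    SemiLin A.C ∧ L = {α | A.BuchiAccept α}

/-- `L` is recognized by a deterministic weak reset PA. -/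
def DetWeakResetRecog {S : Type} (L : Set (ℕ → S)) : Prop :=
  ∃ (d : ℕ) (Q : Type) (_ : Finite Q) (A : DetPA Q S d ℕ),
    SemiLin A.C ∧ L = {α | A.WeakResetAccept α}

/-- `L` is recognized by a deterministic strong reset PA. -/
def DetStrongResetRecog {S : Type} (L : Set (ℕ → S)) : Prop :=
  ∃ (d : ℕ) (Q : Type) (_ : Finite Q) (A : DetPA Q S d ℕ),
    SemiLin A.C ∧ L = {α | A.StrongResetAccept α}

/-- `L` is recognized by a deterministic limit PA (constraint set over `ℕ∞`). -/
def DetLimitRecog {S : Type} (L : Set (ℕ → S)) : Prop :=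
  ∃ (d : ℕ) (Q : Type) (_ : Finite Q) (A : DetPA Q S d ℕ∞),
    SemiLin A.C ∧ L = {α | A.LimitAccept α}

/-- A nondeterministic Parikh automaton. -/
structure NPA (Q S : Type) (d : ℕ) where
  init : Q
  trans : Q → S → (Fin d → ℕ) → Q → Prop
  acc : Q → Prop
  C : Set (Fin d → ℕ)

namespace NPA

variable {Q S : Type} {d : ℕ}

/-- `r, v` form a run of `A` on the infinite word `α`. -/
def IsRun (A : NPA Q S d) (α : ℕ → S) (r : ℕ → Q) (v : ℕ → Fin d → ℕ) : Prop :=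
  r 0 = A.init ∧ ∀ i, A.trans (r i) (α i) (v i) (r (i + 1))

/-- Partial sums of the vectors of a run over positions `m, …, n-1`. -/
def partSum (v : ℕ → Fin d → ℕ) (m n : ℕ) : Fin d → ℕ := ∑ i ∈ Finset.Ico m n, v i

/-- Nondeterministic reachability-regular acceptance. -/
def ReachRegAccept (A : NPA Q S d) (α : ℕ → S) : Prop :=
  ∃ r v, A.IsRun α r v ∧ (∃ i, 1 ≤ i ∧ A.acc (r i) ∧ partSum v 0 i ∈ A.C) ∧
    ∀ n, ∃ i, n ≤ i ∧ A.acc (r i)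

/-- Nondeterministic strong reset acceptance. -/
def StrongResetAccept (A : NPA Q S d) (α : ℕ → S) : Prop :=
  ∃ r v, A.IsRun α r v ∧
    (∀ n, ∃ i, n ≤ i ∧ 1 ≤ i ∧ A.acc (r i)) ∧
    ∀ m n, m < n → (m = 0 ∨ (1 ≤ m ∧ A.acc (r m))) → A.acc (r n) →
      (∀ j, m < j → j < n → ¬ A.acc (r j)) → partSum v m n ∈ A.C

/-- Nondeterministic weak reset acceptance. -/
def WeakResetAccept (A : NPA Q S d) (α : ℕ → S) : Prop :=
  ∃ r v, A.IsRun α r v ∧ ∃ k : ℕ → ℕ, k 0 = 0 ∧ StrictMono k ∧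
    (∀ i, A.acc (r (k (i + 1)))) ∧ (∀ i, partSum v (k i) (k (i + 1)) ∈ A.C)

/-- Runs of a nondeterministic PA on a finite word, from state `p` to state `q`
collecting vector sum `v`. -/
def ListRun (A : NPA Q S d) : Q → List S → (Fin d → ℕ) → Q → Prop
  | p, [], v, q => q = p ∧ v = 0
  | p, a :: w, v, q => ∃ u p', A.trans p a u p' ∧ ∃ v', A.ListRun p' w v' q ∧ v = u + v'

/-- Finite-word acceptance for a nondeterministic PA. -/
def AcceptsWord (A : NPA Q S d) (w : List S) : Prop :=
  ∃ v q, A.ListRun A.init w v q ∧ A.acc q ∧ v ∈ A.C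

end NPA

/-- `L` is recognized by a (nondeterministic) reachability-regular PA. -/
def NPAReachRegRecog {S : Type} (L : Set (ℕ → S)) : Prop :=
  ∃ (d : ℕ) (Q : Type) (_ : Finite Q) (A : NPA Q S d),
    SemiLin A.C ∧ L = {α | A.ReachRegAccept α}

/-- `L` is recognized by a (nondeterministic) strong reset PA. -/
def NPAStrongResetRecog {S : Type} (L : Set (ℕ → S)) : Prop :=
  ∃ (d : ℕ) (Q : Type) (_ : Finite Q) (A : NPA Q S d),
    SemiLin A.C ∧ L = {α | A.StrongResetAccept α}

/-- `L` is recognized by a (nondeterministic) weak reset PA. -/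
def NPAWeakResetRecog {S : Type} (L : Set (ℕ → S)) : Prop :=
  ∃ (d : ℕ) (Q : Type) (_ : Finite Q) (A : NPA Q S d),
    SemiLin A.C ∧ L = {α | A.WeakResetAccept α}

/-- A nondeterministic Büchi automaton. -/
structure NBA (Q S : Type) where
  init : Q
  trans : Q → S → Q → Prop
  acc : Q → Prop

/-- Büchi acceptance. -/
def NBA.Accepts {Q S : Type} (B : NBA Q S) (α : ℕ → S) : Prop :=
  ∃ r : ℕ → Q, r 0 = B.init ∧ (∀ i, B.trans (r i) (α i) (r (i + 1))) ∧
    ∀ n, ∃ i, n ≤ i ∧ B.acc (r i)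

/-- `L` is ω-regular: recognized by a nondeterministic Büchi automaton. -/
def OmegaRegular {S : Type} (L : Set (ℕ → S)) : Prop :=
  ∃ (Q : Type) (_ : Finite Q) (B : NBA Q S), L = {α | B.Accepts α}


/-! Writing `T ⊆ P` for the set of periods used at least once, a linear set `C(b, P)` is the
union of the linear sets `C(b + ∑ T, T)`, whose periods all lie below their base point. On such
a cone `x + ℕ T` the map `f` is affine coordinatewise: constantly `0` where `x` is `∞`, and
a translation by `1` elsewhere, since there every period is finite. Hence `f` maps each piece onto
a linear set, and `f(C)` is semi-linear. The inverse `0 ↦ ∞, i + 1 ↦ i` is affine on the same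
kind of cones (where `x` is `0` every period vanishes), which gives the converse. -/

open Finset

section SemiLin

variable {d : ℕ} {M : Type} [AddCommMonoid M]

theorem semiLin_iff_exists_finite_index (S : Set (Fin d → M)) :
    SemiLin S ↔ ∃ (ι : Type) (_ : Finite ι) (b : ι → Fin d → M) (P : ι → Finset (Fin d → M)),
      S = ⋃ i, LinSet (b i) (P i) := by
  refine ⟨fun ⟨n, b, P, hS⟩ => ⟨Fin n, inferInstance, b, P, hS⟩, ?_⟩
  rintro ⟨ι, _, b, P, rfl⟩
  obtain ⟨n, ⟨e⟩⟩ := Finite.exists_equiv_fin ι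
  exact ⟨n, b ∘ e.symm, P ∘ e.symm, (e.symm.surjective.iUnion_comp _).symm⟩

theorem semiLin_linSet (b : Fin d → M) (P : Finset (Fin d → M)) : SemiLin (LinSet b P) :=
  ⟨1, fun _ => b, fun _ => P, (Set.iUnion_const _).symm⟩

theorem SemiLin.iUnion {ι : Type} [Finite ι] {S : ι → Set (Fin d → M)}
    (hS : ∀ i, SemiLin (S i)) : SemiLin (⋃ i, S i) := by
  simp only [semiLin_iff_exists_finite_index] at hS ⊢
  choose κ _ b P hS using hS
  exact ⟨Σ i, κ i, inferInstance, fun s => b s.1 s.2, fun s => P s.1 s.2,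
    by simp only [hS, Set.iUnion_sigma]⟩

theorem mem_linSet_iff_exists_mem_closure (b v : Fin d → M) (P : Finset (Fin d → M)) :
    v ∈ LinSet b P ↔ ∃ y ∈ AddSubmonoid.closure (P : Set (Fin d → M)), v = b + y := by
  constructor
  · rintro ⟨z, rfl⟩
    exact ⟨_, sum_mem fun p hp => nsmul_mem (AddSubmonoid.subset_closure hp) _, rfl⟩
  · rintro ⟨y, hy, rfl⟩
    obtain ⟨z, -, rfl⟩ := AddSubmonoid.mem_closure_finset.mp hy
    exact ⟨z, rfl⟩

theorem AddSubmonoid.mem_closure_image_finset_iff {A V : Type} [AddCommMonoid A]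
    (T : Finset V) (g : V → A) (y : A) :
    y ∈ AddSubmonoid.closure (g '' T) ↔ ∃ w : V → ℕ, y = ∑ p ∈ T, w p • g p := by
  classical
  constructor
  · intro hy
    induction hy using AddSubmonoid.closure_induction with
    | mem _ h =>
      obtain ⟨p, hp, rfl⟩ := h
      exact ⟨Pi.single p 1, by simp [Pi.single_apply, mem_coe.mp hp]⟩
    | zero => exact ⟨0, by simp⟩
    | add _ _ _ _ h₁ h₂ =>
      obtain ⟨⟨w₁, rfl⟩, ⟨w₂, rfl⟩⟩ := And.intro h₁ h₂
      exact ⟨w₁ + w₂, by simp only [Pi.add_apply, add_nsmul, sum_add_distrib]⟩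
  · rintro ⟨w, rfl⟩
    exact sum_mem _ fun p hp => nsmul_mem (subset_closure (Set.mem_image_of_mem g hp)) _

theorem mem_linSet_image_iff {V : Type} [DecidableEq (Fin d → M)] (b v : Fin d → M)
    (T : Finset V) (g : V → Fin d → M) :
    v ∈ LinSet b (T.image g) ↔ ∃ w : V → ℕ, v = b + ∑ p ∈ T, w p • g p := by
  simp only [mem_linSet_iff_exists_mem_closure, coe_image,
    AddSubmonoid.mem_closure_image_finset_iff]
  constructor
  · rintro ⟨_, ⟨w, rfl⟩, rfl⟩
    exact ⟨w, rfl⟩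
  · rintro ⟨w, rfl⟩
    exact ⟨_, ⟨w, rfl⟩, rfl⟩

theorem linSet_eq_iUnion_powerset (b : Fin d → M) (P : Finset (Fin d → M)) :
    LinSet b P = ⋃ T : P.powerset, LinSet (b + ∑ p ∈ T.1, p) T.1 := by
  classical
  ext v
  simp only [Set.mem_iUnion, Subtype.exists, mem_powerset, exists_prop]
  constructor
  · rintro ⟨z, rfl⟩
    refine ⟨P.filter (z · ≠ 0), filter_subset _ _, fun p => z p - 1, ?_⟩
    rw [← sum_filter_of_ne (p := (z · ≠ 0)) fun p _ h hz => h (by rw [hz, zero_nsmul]),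
      add_assoc, ← sum_add_distrib]
    refine congrArg (b + ·) (sum_congr rfl fun p hp => ?_)
    rw [← succ_nsmul', Nat.sub_add_cancel (Nat.one_le_iff_ne_zero.mpr (mem_filter.mp hp).2)]
  · rintro ⟨T, hT, w, rfl⟩
    refine ⟨fun p => if p ∈ T then w p + 1 else 0, ?_⟩
    simp only [ite_smul, zero_smul, sum_ite_mem, inter_eq_right.mpr hT, add_assoc,
      ← sum_add_distrib, succ_nsmul']

end SemiLin

def AffineOnLowerCones {V W : Type} [AddCommMonoid V] [LE V] [AddCommMonoid W]
    (F : V → W) (L : V → V → W) : Prop :=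
  ∀ (x : V) {ι : Type} (T : Finset ι) (y : ι → V) (w : ι → ℕ), (∀ i ∈ T, y i ≤ x) →
    F (x + ∑ i ∈ T, w i • y i) = F x + ∑ i ∈ T, w i • L x (y i)

namespace AffineOnLowerCones

variable {M N : Type} [AddCommMonoid M] [AddCommMonoid N]

theorem comp_left [LE M] {g : M → N} {L : M → M → N} (hg : AffineOnLowerCones g L) (κ : Type) :
    AffineOnLowerCones (fun v : κ → M => g ∘ v) (fun x p j => L (x j) (p j)) := by
  intro x ι T y w hy
  funext j
  simpa only [Function.comp_apply, Pi.add_apply, Finset.sum_apply, Pi.smul_apply] using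
    hg (x j) T (fun i => y i j) w fun i hi => hy i hi j

variable {d : ℕ} {F : (Fin d → M) → (Fin d → N)} {L : (Fin d → M) → (Fin d → M) → (Fin d → N)}

theorem image_linSet [LE M] [DecidableEq (Fin d → N)] (hF : AffineOnLowerCones F L)
    {x : Fin d → M} {T : Finset (Fin d → M)} (hT : ∀ p ∈ T, p ≤ x) :
    F '' LinSet x T = LinSet (F x) (T.image (L x)) := by
  ext v
  rw [mem_linSet_image_iff]
  constructor
  · rintro ⟨_, ⟨w, rfl⟩, rfl⟩
    exact ⟨w, hF x T (fun p => p) w hT⟩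
  · rintro ⟨w, rfl⟩
    exact ⟨_, ⟨w, rfl⟩, hF x T (fun p => p) w hT⟩

theorem semiLin_image [PartialOrder M] [CanonicallyOrderedAdd M] (hF : AffineOnLowerCones F L)
    {C : Set (Fin d → M)} (hC : SemiLin C) : SemiLin (F '' C) := by
  classical
  obtain ⟨n, b, P, rfl⟩ := hC
  rw [Set.image_iUnion]
  refine SemiLin.iUnion fun i => ?_
  rw [linSet_eq_iUnion_powerset, Set.image_iUnion]
  refine SemiLin.iUnion fun T => ?_
  have hT : ∀ p ∈ T.1, p ≤ b i + ∑ q ∈ T.1, q := fun p hp =>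
    calc p ≤ ∑ q ∈ T.1, q := by rw [← add_sum_erase _ _ hp]; exact le_self_add
      _ ≤ b i + ∑ q ∈ T.1, q := le_add_self
  rw [hF.image_linSet hT]
  exact semiLin_linSet _ _

end AffineOnLowerCones

theorem affineOnLowerCones_of_apply_top_of_apply_coe (f : ℕ∞ → ℕ) (hf_top : f ⊤ = 0)
    (hf_nat : ∀ i : ℕ, f (i : ℕ∞) = i + 1) :
    AffineOnLowerCones f (fun x y => if x = ⊤ then 0 else y.toNat) := by
  intro x ι T y w hy
  induction x using ENat.recTopCoe with
  | top => simp [hf_top]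
  | coe m =>
    have hy_coe : ∀ i ∈ T, ((y i).toNat : ℕ∞) = y i := fun i hi =>
      ENat.natCast_toNat (ne_top_of_le_ne_top (ENat.natCast_ne_top m) (hy i hi))
    have hsum : (m : ℕ∞) + ∑ i ∈ T, w i • y i = ((m + ∑ i ∈ T, w i * (y i).toNat : ℕ) : ℕ∞) := by
      push_cast
      refine congrArg ((m : ℕ∞) + ·) (sum_congr rfl fun i hi => ?_)
      rw [hy_coe i hi, nsmul_eq_mul]
    simp only [hsum, hf_nat, ENat.natCast_ne_top, if_false, smul_eq_mul]
    ring

def unshift : ℕ → ℕ∞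
  | 0 => ⊤
  | i + 1 => i

theorem affineOnLowerCones_unshift : AffineOnLowerCones unshift (fun _ y => (y : ℕ∞)) := by
  intro x ι T y w hy
  cases x with
  | zero =>
    have hsum : ∑ i ∈ T, w i • y i = 0 :=
      sum_eq_zero fun i hi => by rw [Nat.le_zero.mp (hy i hi), smul_zero]
    rw [zero_add, hsum]
    exact (top_add _).symm
  | succ m =>
    rw [add_right_comm]
    simp [unshift]

theorem unshift_comp_eq_id (f : ℕ∞ → ℕ) (hf_top : f ⊤ = 0)
    (hf_nat : ∀ i : ℕ, f (i : ℕ∞) = i + 1) : unshift ∘ f = id := by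
  funext x
  induction x using ENat.recTopCoe with
  | top => simp [hf_top, unshift]
  | coe m => simp [hf_nat, unshift]

/-- with `f : ℕ∞ → ℕ` the bijection sending `∞ ↦ 0` and `i ↦ i+1`,
extended componentwise, a set `C ⊆ ℕ∞^d` is semi-linear iff its image `f(C) ⊆ ℕ^d` is. -/
theorem image_semiLin_iff_semiLin {d : ℕ} (f : ℕ∞ → ℕ)
    (hf_top : f ⊤ = 0) (hf_nat : ∀ i : ℕ, f (i : ℕ∞) = i + 1)
    (C : Set (Fin d → ℕ∞)) :
    SemiLin ((fun v : Fin d → ℕ∞ => f ∘ v) '' C) ↔ SemiLin C := by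
  refine ⟨fun h => ?_,
    ((affineOnLowerCones_of_apply_top_of_apply_coe f hf_top hf_nat).comp_left _).semiLin_image⟩
  have hC : (fun v : Fin d → ℕ => unshift ∘ v) '' ((fun v : Fin d → ℕ∞ => f ∘ v) '' C) = C := by
    simp [Set.image_image, ← Function.comp_assoc, unshift_comp_eq_id f hf_top hf_nat]
  exact hC ▸ (affineOnLowerCones_unshift.comp_left _).semiLin_image h
end

section
/- An ω-language L ⊆ Σ^ω is recognized by a deterministic reachability Parikh automaton if and only if L = U · Σ^ω for some language U ⊆ Σ* recognized by a deterministic (finite-word) Parikh automaton. -/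
section Aux

variable {Q S M : Type} {d : ℕ}

lemma pref_succ (α : ℕ → S) (n : ℕ) : pref α (n + 1) = pref α n ++ [α n] := by
  show List.ofFn _ = List.ofFn _ ++ _
  rw [List.ofFn_succ']
  simp [Fin.last, List.concat_eq_append]

@[simp] lemma pref_zero (α : ℕ → S) : pref α 0 = [] := rfl

@[simp] lemma pref_length (α : ℕ → S) (n : ℕ) : (pref α n).length = n := by
  simp [pref]

namespace DetPA

lemma runList_append (A : DetPA Q S d M) (u v : List S) (p : Q) :
    A.runList p (u ++ v) = A.runList (A.runList p u) v := by
  induction u generalizing p with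
  | nil => rfl
  | cons a u ih => simp [runList, ih]

lemma sumList_append (A : DetPA Q S d M) (u v : List S) (p : Q) :
    A.sumList p (u ++ v) = A.sumList p u + A.sumList (A.runList p u) v := by
  induction u generalizing p with
  | nil => simp [sumList, runList]
  | cons a u ih => simp [sumList, runList, ih, add_assoc]

lemma runList_pref (A : DetPA Q S d M) (α : ℕ → S) (n : ℕ) :
    A.runList A.init (pref α n) = A.stateAt α n := by
  induction n with
  | zero => rfl
  | succ n ih => rw [pref_succ, runList_append, ih]; rfl

lemma sumList_pref (A : DetPA Q S d M) (α : ℕ → S) (n : ℕ) :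
    A.sumList A.init (pref α n) = A.vecSum α 0 n := by
  induction n with
  | zero => simp [vecSum, sumList]
  | succ n ih =>
    rw [pref_succ, sumList_append, ih, runList_pref, vecSum, vecSum,
      Finset.sum_Ico_succ_top (Nat.zero_le n)]
    simp [sumList, step]

/-- Track whether at least one letter has been read. -/
def addNE (A : DetPA Q S d M) : DetPA (Q × Bool) S d M where
  init := (A.init, false)
  trans := fun pb a => ((A.trans pb.1 a).1, ((A.trans pb.1 a).2, true))
  acc := fun pb => A.acc pb.1 ∧ pb.2 = true
  C := A.C

lemma addNE_runList_true (A : DetPA Q S d M) (w : List S) (p : Q) :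
    (A.addNE).runList (p, true) w = (A.runList p w, true) := by
  induction w generalizing p with
  | nil => rfl
  | cons a w ih =>
    show (A.addNE).runList ((A.trans p a).2, true) w = _
    rw [ih]; rfl

lemma addNE_runList_cons (A : DetPA Q S d M) (a : S) (w : List S) (p : Q) (b : Bool) :
    (A.addNE).runList (p, b) (a :: w) = (A.runList p (a :: w), true) := by
  show (A.addNE).runList ((A.trans p a).2, true) w = _
  rw [addNE_runList_true]; rfl

lemma addNE_sumList (A : DetPA Q S d M) (w : List S) (p : Q) (b : Bool) :
    (A.addNE).sumList (p, b) w = A.sumList p w := by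
  induction w generalizing p b with
  | nil => rfl
  | cons a w ih =>
    show (A.trans p a).1 + (A.addNE).sumList ((A.trans p a).2, true) w = _
    rw [ih]; rfl

lemma addNE_accepts (A : DetPA Q S d ℕ) (w : List S) :
    (A.addNE).AcceptsWord w ↔ A.AcceptsWord w ∧ w ≠ [] := by
  have hinit : (A.addNE).init = (A.init, false) := rfl
  cases w with
  | nil =>
    constructor
    · rintro ⟨⟨_, h2⟩, _⟩; simp [runList, addNE] at h2
    · rintro ⟨_, hw⟩; simp at hw
  | cons a w =>
    constructor
    · rintro ⟨hacc, hC⟩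
      rw [hinit, addNE_runList_cons] at hacc
      rw [hinit, addNE_sumList] at hC
      exact ⟨⟨hacc.1, hC⟩, by simp⟩
    · rintro ⟨⟨h1, hC⟩, _⟩
      refine ⟨?_, ?_⟩
      · rw [hinit, addNE_runList_cons]; exact ⟨h1, rfl⟩
      · rw [hinit, addNE_sumList]; exact hC

end DetPA

end Aux

/-- an ω-language is deterministic reachability PA recognizable iff it is
of the form `U · Σ^ω` for a language `U` recognized by a deterministic finite-word PA. -/
theorem detReach_iff_detPA_suffixClosure {S : Type} [Finite S] (L : Set (ℕ → S)) :
    DetReachRecog L ↔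
      ∃ U : Set (List S), DetPARecogFin U ∧ L = {α | ∃ n, pref α n ∈ U} := by
  constructor
  · rintro ⟨d, Q, hQ, A, hC, rfl⟩
    haveI := hQ
    refine ⟨{w | (A.addNE).AcceptsWord w}, ⟨d, Q × Bool, inferInstance, A.addNE, hC, rfl⟩, ?_⟩
    ext α
    simp only [Set.mem_setOf_eq, DetPA.addNE_accepts]
    constructor
    · rintro ⟨i, h1, hacc, hsum⟩
      refine ⟨i, ⟨⟨?_, ?_⟩, ?_⟩⟩
      · rw [DetPA.runList_pref]; exact hacc
      · rw [DetPA.sumList_pref]; exact hsum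
      · intro h
        have := congrArg List.length h
        simp at this
        omega
    · rintro ⟨n, ⟨h1, h2⟩, hne⟩
      have hn : 1 ≤ n := by
        rcases Nat.eq_zero_or_pos n with h | h
        · subst h; simp at hne
        · exact h
      exact ⟨n, hn, by rw [← DetPA.runList_pref]; exact h1,
        by rw [← DetPA.sumList_pref]; exact h2⟩
  · rintro ⟨U, ⟨d, Q, hQ, A, hC, rfl⟩, rfl⟩
    by_cases h0 : A.AcceptsWord ([] : List S)
    · refine ⟨0, Unit, inferInstance,
        ⟨(), fun _ _ => (0, ()), fun _ => True, Set.univ⟩, ?_, ?_⟩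
      · refine ⟨1, fun _ => 0, fun _ => ∅, ?_⟩
        ext v
        have hv : v = 0 := funext fun j => j.elim0
        simp [LinSet, hv]
      · ext α
        simp only [Set.mem_setOf_eq]
        constructor
        · intro _; exact ⟨1, le_refl 1, trivial, Set.mem_univ _⟩
        · intro _; exact ⟨0, h0⟩
    · refine ⟨d, Q, hQ, A, hC, ?_⟩
      ext α
      simp only [Set.mem_setOf_eq]
      constructor
      · rintro ⟨n, hn⟩
        have hne : n ≠ 0 := by
          rintro rfl
          exact h0 (by simpa using hn)
        exact ⟨n, Nat.one_le_iff_ne_zero.mpr hne,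
          by rw [← DetPA.runList_pref]; exact hn.1,
          by rw [← DetPA.sumList_pref]; exact hn.2⟩
      · rintro ⟨i, h1, hacc, hsum⟩
        exact ⟨i, by rw [DetPA.runList_pref]; exact hacc,
          by rw [DetPA.sumList_pref]; exact hsum⟩
end

section
/- Every ω-language recognized by a deterministic reachability Parikh automaton is recognized by a deterministic reachability-regular Parikh automaton, and the inclusion is strict: {aⁿbⁿa^ω | n > 0} is deterministic reachability-regular PA recognizable but not deterministic reachability PA recognizable. -/
/-- The ω-language `{aⁿbⁿa^ω | n > 0}` over `{a,b} = Bool` (`a := true`, `b := false`). -/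
def Lanbnaw : Set (ℕ → Bool) :=
  {α | ∃ n, 0 < n ∧ ∀ i, α i = if i < n then true else if i < 2 * n then false else true}

/-!
A deterministic reachability PA becomes a reachability-regular one by making every state
accepting and recording, in one extra counter, the parity that tells whether the current state
of the original automaton is accepting; the constraint set then also checks that parity.

Reachability acceptance is witnessed by a finite prefix, so a language of a deterministic
reachability PA contains, with each of its words, every word sharing a long enough prefix.
`aba^ω` lies in `{aⁿbⁿa^ω | n > 0}` but no word ending in `b^ω` does. A four-state automaton
counting the `a`-block and the `b`-block recognizes the language with the reachability-regular
condition: the Büchi part forbids leaving the trailing-`a` state.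
-/

theorem linSet_snoc_mod_iff {d m r : ℕ} (hr : r < m) (b : Fin d → ℕ) (P : Finset (Fin d → ℕ))
    (w : Fin (d + 1) → ℕ) :
    w ∈ LinSet (Fin.snoc b r) (insert (Fin.snoc 0 m) (P.image (Fin.snoc · 0))) ↔
      Fin.init w ∈ LinSet b P ∧ w (Fin.last d) % m = r := by
  have hinj : Set.InjOn (Fin.snoc · 0 : (Fin d → ℕ) → Fin (d + 1) → ℕ) P :=
    fun p _ q _ h => (Fin.snoc_injective2 h).1
  have hfresh : Fin.snoc 0 m ∉ P.image (Fin.snoc · 0 : (Fin d → ℕ) → Fin (d + 1) → ℕ) := by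
    simp only [Finset.mem_image, Fin.snoc_inj, not_exists, not_and]
    omega
  have hsplit : ∀ (k : ℕ) (z : (Fin d → ℕ) → ℕ),
      Fin.snoc b r + (k • Fin.snoc 0 m + ∑ p ∈ P, z p • Fin.snoc p 0) =
        (Fin.snoc (b + ∑ p ∈ P, z p • p) (r + k * m) : Fin (d + 1) → ℕ) := by
    intro k z
    ext j
    refine Fin.lastCases ?_ (fun j => ?_) j <;> simp [Finset.sum_apply, mul_comm]
  simp only [LinSet, Set.mem_ofPred_eq, Finset.sum_insert hfresh, Finset.sum_image hinj]
  constructor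
  · rintro ⟨z, rfl⟩
    rw [hsplit, Fin.init_snoc, Fin.snoc_last, Nat.add_mul_mod_self_right, Nat.mod_eq_of_lt hr]
    exact ⟨⟨_, rfl⟩, rfl⟩
  · rintro ⟨⟨z, hz⟩, hmod⟩
    refine ⟨fun q => if q = Fin.snoc 0 m then w (Fin.last d) / m else z (Fin.init q), ?_⟩
    have hne : ∀ p : Fin d → ℕ, (Fin.snoc p 0 : Fin (d + 1) → ℕ) ≠ Fin.snoc 0 m := by
      simp only [ne_eq, Fin.snoc_inj, not_and]
      omega
    simp only [if_pos, hne, if_false, Fin.init_snoc]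
    rw [hsplit, ← hz, ← Fin.snoc_init_self w]
    simp only [Fin.init_snoc, Fin.snoc_last]
    rw [← hmod, Nat.mod_add_div']

theorem SemiLin.snoc_mod {d m r : ℕ} {C : Set (Fin d → ℕ)} (hC : SemiLin C) (hr : r < m) :
    SemiLin {w : Fin (d + 1) → ℕ | Fin.init w ∈ C ∧ w (Fin.last d) % m = r} := by
  obtain ⟨n, b, P, rfl⟩ := hC
  refine ⟨n, fun i => Fin.snoc (b i) r,
    fun i => insert (Fin.snoc 0 m) ((P i).image (Fin.snoc · 0)), ?_⟩
  ext w
  simp only [Set.mem_ofPred_eq, Set.mem_iUnion, linSet_snoc_mod_iff hr]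
  exact ⟨fun ⟨⟨i, hi⟩, hm⟩ => ⟨i, hi, hm⟩, fun ⟨i, hi, hm⟩ => ⟨⟨i, hi⟩, hm⟩⟩

namespace DetPA

variable {Q S M : Type} {d : ℕ}

theorem stateAt_succ (A : DetPA Q S d M) (α : ℕ → S) (i : ℕ) :
    A.stateAt α (i + 1) = (A.trans (A.stateAt α i) (α i)).2 := rfl

theorem vecSum_zero_succ (A : DetPA Q S d M) (α : ℕ → S) (i : ℕ) :
    A.vecSum α 0 (i + 1) = A.vecSum α 0 i + (A.trans (A.stateAt α i) (α i)).1 :=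
  Finset.sum_Ico_succ_top (Nat.zero_le i) _

theorem stateAt_congr (A : DetPA Q S d M) {α β : ℕ → S} {i : ℕ} (h : ∀ j < i, α j = β j) :
    A.stateAt α i = A.stateAt β i := by
  induction i with
  | zero => rfl
  | succ i ih =>
    rw [stateAt_succ, stateAt_succ, ih fun j hj => h j (by omega), h i (by omega)]

theorem vecSum_congr (A : DetPA Q S d M) {α β : ℕ → S} {i : ℕ} (h : ∀ j < i, α j = β j) :
    A.vecSum α 0 i = A.vecSum β 0 i := by
  induction i with
  | zero => rfl
  | succ i ih =>
    rw [vecSum_zero_succ, vecSum_zero_succ, ih fun j hj => h j (by omega),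
      A.stateAt_congr fun j hj => h j (by omega), h i (by omega)]

theorem ReachAccept.exists_prefix {A : DetPA Q S d ℕ} {α : ℕ → S} (h : A.ReachAccept α) :
    ∃ i, ∀ β : ℕ → S, (∀ j < i, α j = β j) → A.ReachAccept β := by
  obtain ⟨i, hi, hacc, hC⟩ := h
  exact ⟨i, fun β hβ => ⟨i, hi, A.stateAt_congr hβ ▸ hacc, A.vecSum_congr hβ ▸ hC⟩⟩

open Classical in
noncomputable def accBit (A : DetPA Q S d M) (q : Q) : ℕ := if A.acc q then 1 else 0

theorem accBit_of_acc {A : DetPA Q S d M} {q : Q} (h : A.acc q) : A.accBit q = 1 := by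
  simp [accBit, h]

theorem accBit_of_not_acc {A : DetPA Q S d M} {q : Q} (h : ¬A.acc q) : A.accBit q = 0 := by
  simp [accBit, h]

theorem accBit_le_one (A : DetPA Q S d M) (q : Q) : A.accBit q ≤ 1 := by
  unfold accBit; split_ifs <;> omega

/-- All states accept; the extra last counter is incremented by `accBit p + accBit p'` on a
transition `p → p'`, so after `i` steps it telescopes to `accBit q₀ + accBit qᵢ` modulo `2`. -/
noncomputable def withAccParity (A : DetPA Q S d ℕ) : DetPA Q S (d + 1) ℕ where
  init := A.init
  trans p a := (Fin.snoc (A.trans p a).1 (A.accBit p + A.accBit (A.trans p a).2), (A.trans p a).2)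
  acc _ := True
  C := {w | Fin.init w ∈ A.C ∧ w (Fin.last d) % 2 = (A.accBit A.init + 1) % 2}

variable (A : DetPA Q S d ℕ) (α : ℕ → S)

theorem withAccParity_stateAt (i : ℕ) : A.withAccParity.stateAt α i = A.stateAt α i := by
  induction i with
  | zero => rfl
  | succ i ih => rw [stateAt_succ, stateAt_succ, ih]; rfl

theorem init_withAccParity_vecSum (i : ℕ) :
    Fin.init (A.withAccParity.vecSum α 0 i) = A.vecSum α 0 i := by
  induction i with
  | zero => rfl
  | succ i ih =>
    rw [vecSum_zero_succ, vecSum_zero_succ, ← ih, withAccParity_stateAt]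
    ext j
    simp [Fin.init, withAccParity]

theorem withAccParity_vecSum_last (i : ℕ) :
    A.withAccParity.vecSum α 0 i (Fin.last d) + A.accBit A.init =
      2 * ∑ j ∈ Finset.range i, A.accBit (A.stateAt α j) + A.accBit (A.stateAt α i) := by
  induction i with
  | zero => simp [vecSum, stateAt, run]
  | succ i ih =>
    have hstep : (A.withAccParity.trans (A.stateAt α i) (α i)).1 (Fin.last d) =
        A.accBit (A.stateAt α i) + A.accBit (A.stateAt α (i + 1)) :=
      Fin.snoc_last (α := fun _ => ℕ) _ _
    rw [vecSum_zero_succ, Pi.add_apply, withAccParity_stateAt, hstep, Finset.sum_range_succ]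
    omega

theorem acc_stateAt_iff_parity (i : ℕ) :
    A.acc (A.stateAt α i) ↔
      A.withAccParity.vecSum α 0 i (Fin.last d) % 2 = (A.accBit A.init + 1) % 2 := by
  have h := A.withAccParity_vecSum_last α i
  have hinit := A.accBit_le_one A.init
  by_cases hq : A.acc (A.stateAt α i)
  · rw [accBit_of_acc hq] at h
    simp only [hq, true_iff]
    omega
  · rw [accBit_of_not_acc hq] at h
    simp only [hq, false_iff]
    omega

theorem withAccParity_reachRegAccept_iff :
    A.withAccParity.ReachRegAccept α ↔ A.ReachAccept α := by
  constructor
  · rintro ⟨⟨i, hi, -, hinit, hlast⟩, -⟩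
    exact ⟨i, hi, (A.acc_stateAt_iff_parity α i).2 hlast, A.init_withAccParity_vecSum α i ▸ hinit⟩
  · rintro ⟨i, hi, hacc, hC⟩
    refine ⟨⟨i, hi, trivial, ?_, (A.acc_stateAt_iff_parity α i).1 hacc⟩, fun n => ⟨n, le_rfl, trivial⟩⟩
    exact (A.init_withAccParity_vecSum α i).symm ▸ hC

end DetPA

theorem DetReachRecog.detReachRegRecog {S : Type} {L : Set (ℕ → S)} (h : DetReachRecog L) :
    DetReachRegRecog L := by
  obtain ⟨d, Q, hQ, A, hC, rfl⟩ := h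
  refine ⟨d + 1, Q, hQ, A.withAccParity, hC.snoc_mod (Nat.mod_lt _ two_pos), ?_⟩
  ext α
  exact (A.withAccParity_reachRegAccept_iff α).symm

theorem DetReachRecog.exists_prefix_of_mem {S : Type} {L : Set (ℕ → S)} (h : DetReachRecog L)
    {α : ℕ → S} (hα : α ∈ L) : ∃ i, ∀ β : ℕ → S, (∀ j < i, α j = β j) → β ∈ L := by
  obtain ⟨d, Q, -, A, -, rfl⟩ := h
  exact DetPA.ReachAccept.exists_prefix hα

def abaWord (x y : ℕ) (i : ℕ) : Bool := if i < x then true else if i < x + y then false else true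

theorem mem_Lanbnaw_iff {α : ℕ → Bool} : α ∈ Lanbnaw ↔ ∃ n, 0 < n ∧ α = abaWord n n := by
  simp only [Lanbnaw, abaWord, ← two_mul, funext_iff, Set.mem_ofPred_eq]

theorem not_detReachRecog_Lanbnaw : ¬DetReachRecog Lanbnaw := by
  intro h
  obtain ⟨i, hi⟩ := h.exists_prefix_of_mem (mem_Lanbnaw_iff.2 ⟨1, one_pos, rfl⟩)
  obtain ⟨n, -, hn⟩ := mem_Lanbnaw_iff.1
    (hi (fun j => if j < i then abaWord 1 1 j else false) fun j hj => by simp [hj])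
  have := congrFun hn (i + 2 * n)
  simp only [abaWord] at this
  split_ifs at this <;> omega

/-- States: `0` reading the leading `a`s, `1` reading the `b`s, `2` reading the trailing `a`s,
`3` dead; the two counters are the lengths of the `a`-block and of the `b`-block. -/
def anbnAut : DetPA (Fin 4) Bool 2 ℕ where
  init := 0
  trans p a :=
    if p = 0 then (if a then (![1, 0], 0) else (![0, 1], 1))
    else if p = 1 then (if a then (![0, 0], 2) else (![0, 1], 1))
    else if p = 2 then (if a then (![0, 0], 2) else (![0, 0], 3))
    else (![0, 0], 3)
  acc q := q = 2
  C := {v | v 1 = v 0 ∧ 1 ≤ v 0}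

theorem anbnAut_C_semiLin : SemiLin anbnAut.C := by
  refine ⟨1, fun _ => fun _ => 1, fun _ => {fun _ => 1}, ?_⟩
  ext v
  simp only [Set.mem_iUnion, LinSet, Set.mem_ofPred_eq, Finset.sum_singleton]
  constructor
  · rintro ⟨hvv, hv1⟩
    refine ⟨0, fun _ => v 0 - 1, ?_⟩
    funext j
    fin_cases j <;> simp <;> omega
  · rintro ⟨-, z, hz⟩
    have h0 := congrFun hz 0
    have h1 := congrFun hz 1
    simp only [Pi.add_apply, Pi.smul_apply, smul_eq_mul, mul_one] at h0 h1
    exact ⟨by rw [h0, h1], by rw [h0]; omega⟩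

theorem anbnAut_run_abaWord {n : ℕ} (hn : 0 < n) (i : ℕ) :
    anbnAut.stateAt (abaWord n n) i = (if i ≤ n then 0 else if i ≤ 2 * n then 1 else 2) ∧
      anbnAut.vecSum (abaWord n n) 0 i = ![min i n, min (i - n) n] := by
  induction i with
  | zero => exact ⟨rfl, by ext j; fin_cases j <;> simp [DetPA.vecSum]⟩
  | succ i ih =>
    rw [DetPA.stateAt_succ, DetPA.vecSum_zero_succ, ih.1, ih.2]
    rcases (show i < n ∨ i = n ∨ (n < i ∧ i < 2 * n) ∨ i = 2 * n ∨ 2 * n < i by omega)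
      with h | h | h | h | h <;>
    · simp (disch := omega) only [abaWord, if_pos, if_neg]
      refine ⟨rfl, ?_⟩
      ext j
      fin_cases j <;> simp [anbnAut] <;> omega

theorem anbnAut_reachRegAccept_abaWord {n : ℕ} (hn : 0 < n) :
    anbnAut.ReachRegAccept (abaWord n n) := by
  have hacc : ∀ i, 2 * n < i → anbnAut.acc (anbnAut.stateAt (abaWord n n) i) := fun i hi => by
    simp (disch := omega) only [(anbnAut_run_abaWord hn i).1, if_neg]
    rfl
  refine ⟨⟨2 * n + 1, by omega, hacc _ (by omega), ?_⟩,
    fun m => ⟨max m (2 * n + 1), le_max_left _ _, hacc _ (by omega)⟩⟩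
  rw [(anbnAut_run_abaWord hn _).2]
  simp only [anbnAut, Set.mem_ofPred_eq, Matrix.cons_val_zero, Matrix.cons_val_one]
  omega

def anbnPhase (q : Fin 4) (i x y : ℕ) : Prop :=
  (q = 0 ∧ x = i ∧ y = 0) ∨ (q = 1 ∧ x + y = i ∧ 0 < y) ∨ (q = 2 ∧ x + y < i ∧ 0 < y)

theorem anbnPhase_step {q : Fin 4} {i x y : ℕ} (h : anbnPhase q i x y) (a : Bool) :
    (anbnAut.trans q a).2 = 3 ∨
      anbnPhase (anbnAut.trans q a).2 (i + 1)
          (x + (anbnAut.trans q a).1 0) (y + (anbnAut.trans q a).1 1) ∧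
        (∀ j < i, abaWord x y j =
          abaWord (x + (anbnAut.trans q a).1 0) (y + (anbnAut.trans q a).1 1) j) ∧
        a = abaWord (x + (anbnAut.trans q a).1 0) (y + (anbnAut.trans q a).1 1) i := by
  rcases h with ⟨rfl, rfl, rfl⟩ | ⟨rfl, rfl, hy⟩ | ⟨rfl, hxy, hy⟩ <;> cases a <;>
    simp [anbnAut, anbnPhase, abaWord] <;> grind

theorem anbnAut_dead_or_abaWord_prefix (α : ℕ → Bool) (i : ℕ) :
    anbnAut.stateAt α i = 3 ∨
      (∀ j < i, α j = abaWord (anbnAut.vecSum α 0 i 0) (anbnAut.vecSum α 0 i 1) j) ∧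
        anbnPhase (anbnAut.stateAt α i) i (anbnAut.vecSum α 0 i 0) (anbnAut.vecSum α 0 i 1) := by
  induction i with
  | zero => exact Or.inr ⟨fun j hj => absurd hj (Nat.not_lt_zero j), Or.inl ⟨rfl, rfl, rfl⟩⟩
  | succ i ih =>
    rw [DetPA.stateAt_succ, DetPA.vecSum_zero_succ]
    rcases ih with h | ⟨hpre, hphase⟩
    · left
      rw [h]
      cases α i <;> rfl
    · rcases anbnPhase_step hphase (α i) with h | ⟨hphase', hshift, hlast⟩
      · exact Or.inl h
      refine Or.inr ⟨fun j hj => ?_, hphase'⟩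
      rcases Nat.lt_succ_iff_lt_or_eq.1 hj with hj | rfl
      · exact (hpre j hj).trans (hshift j hj)
      · exact hlast

theorem anbnAut_stateAt_mono (α : ℕ → Bool) : Monotone (anbnAut.stateAt α) :=
  monotone_nat_of_le_succ fun i => by
    rw [DetPA.stateAt_succ]
    generalize anbnAut.stateAt α i = q
    revert q
    cases α i <;> decide

theorem anbnAut_eq_abaWord_of_reachRegAccept {α : ℕ → Bool} (h : anbnAut.ReachRegAccept α) :
    ∃ n, 0 < n ∧ α = abaWord n n := by
  obtain ⟨⟨i, -, hacc, hx, hpos⟩, hinf⟩ := h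
  have htwo : ∀ j, i ≤ j → anbnAut.stateAt α j = 2 := fun j hj => by
    obtain ⟨k, hjk, hk⟩ := hinf j
    exact le_antisymm (hk ▸ anbnAut_stateAt_mono α hjk) (hacc ▸ anbnAut_stateAt_mono α hj)
  have htail : ∀ j, i ≤ j → α j = true := fun j hj => by
    have h := htwo (j + 1) (by omega)
    rw [DetPA.stateAt_succ, htwo j hj] at h
    revert h
    cases α j <;> decide
  rcases anbnAut_dead_or_abaWord_prefix α i with h3 | ⟨hpre, hphase⟩
  · exact absurd (hacc.symm.trans h3) (by decide)
  rw [show anbnAut.vecSum α 0 i 1 = anbnAut.vecSum α 0 i 0 from hx] at hpre hphase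
  have hlen : 2 * anbnAut.vecSum α 0 i 0 < i := by
    rw [show anbnAut.stateAt α i = 2 from hacc] at hphase
    simp only [anbnPhase] at hphase
    omega
  refine ⟨_, hpos, funext fun j => ?_⟩
  rcases lt_or_ge j i with hj | hj
  · exact hpre j hj
  · simp (disch := omega) only [htail j hj, abaWord, if_neg]

theorem detReachRegRecog_Lanbnaw : DetReachRegRecog Lanbnaw := by
  refine ⟨2, Fin 4, inferInstance, anbnAut, anbnAut_C_semiLin, ?_⟩
  ext α
  rw [mem_Lanbnaw_iff]
  constructor
  · rintro ⟨n, hn, rfl⟩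
    exact anbnAut_reachRegAccept_abaWord hn
  · exact anbnAut_eq_abaWord_of_reachRegAccept

/-- deterministic reachability PA ⊊ deterministic reachability-regular PA,
with strictness witnessed by `{aⁿbⁿa^ω | n > 0}`. -/
theorem detReach_subset_detReachReg_strict :
    (∀ (S : Type) (L : Set (ℕ → S)), DetReachRecog L → DetReachRegRecog L) ∧
    DetReachRegRecog Lanbnaw ∧ ¬ DetReachRecog Lanbnaw :=
  ⟨fun _ _ h => h.detReachRegRecog, detReachRegRecog_Lanbnaw, not_detReachRecog_Lanbnaw⟩
end

section
/- Let A be a deterministic Büchi Parikh automaton whose semi-linear set is a single linear set C(b, P) with base vector b = 0. Then the ω-language accepted by A under the Büchi condition equals the ω-language accepted by A under the weak reset condition. -/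
/-! Along the accepting positions whose prefix sum lies in `C(0, P)`, choose coefficient
vectors in `ℕ^P` for these prefix sums. By Dickson's lemma a subsequence of them is
pointwise increasing, and then the difference of two consecutive coefficient vectors
expresses the vector of the segment between the two positions as an element of `C(0, P)`:
these positions form a weak reset sequence. Conversely, `C(0, P)` is the submonoid generated
by `P`, so at the reset positions the prefix sums, being sums of segment vectors, lie in it. -/

section LinSet

variable {d : ℕ} {M : Type}

theorem linSet_zero_eq_closure [AddCommMonoid M] (P : Finset (Fin d → M)) :
    LinSet 0 P = AddSubmonoid.closure (P : Set (Fin d → M)) := by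
  refine Set.Subset.antisymm ?_ fun v hv => ?_
  · rintro v ⟨z, rfl⟩
    rw [zero_add]
    exact AddSubmonoid.sum_mem _ fun p hp =>
      AddSubmonoid.nsmul_mem _ (AddSubmonoid.subset_closure hp) _
  · obtain ⟨z, -, rfl⟩ := AddSubmonoid.mem_closure_finset.1 hv
    exact ⟨z, (zero_add _).symm⟩

theorem mem_linSet_zero_of_add_eq [AddCancelCommMonoid M] {P : Finset (Fin d → M)}
    {z z' : (Fin d → M) → ℕ} (hzz' : ∀ p ∈ P, z p ≤ z' p) {b : Fin d → M}
    (h : ∑ p ∈ P, z p • p + b = ∑ p ∈ P, z' p • p) : b ∈ LinSet 0 P := by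
  refine ⟨fun p => z' p - z p, add_left_cancel (a := ∑ p ∈ P, z p • p) ?_⟩
  rw [h, zero_add, ← Finset.sum_add_distrib]
  exact Finset.sum_congr rfl fun p hp => by rw [← add_smul, Nat.add_sub_cancel' (hzz' p hp)]

end LinSet

namespace DetPA

variable {Q S M : Type} {d : ℕ}

theorem vecSum_self (A : DetPA Q S d M) (α : ℕ → S) (m : ℕ) : A.vecSum α m m = 0 := by
  simp [vecSum]

theorem vecSum_add_vecSum (A : DetPA Q S d M) (α : ℕ → S) {l m n : ℕ} (hlm : l ≤ m)
    (hmn : m ≤ n) : A.vecSum α l m + A.vecSum α m n = A.vecSum α l n :=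
  Finset.sum_Ico_consecutive _ hlm hmn

theorem vecSum_zero_mem_of_segments (A : DetPA Q S d M) (α : ℕ → S)
    {C : AddSubmonoid (Fin d → ℕ)} {k : ℕ → ℕ} (hk0 : k 0 = 0) (hk : Monotone k)
    (hseg : ∀ i, A.vecSum α (k i) (k (i + 1)) ∈ C) (j : ℕ) : A.vecSum α 0 (k j) ∈ C := by
  induction j with
  | zero =>
    rw [hk0, vecSum_self]
    exact C.zero_mem
  | succ j ih =>
    rw [← A.vecSum_add_vecSum α (Nat.zero_le _) (hk j.le_succ)]
    exact C.add_mem ih (hseg j)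

theorem buchiAccept_of_weakResetAccept (A : DetPA Q S d ℕ) (α : ℕ → S)
    {C : AddSubmonoid (Fin d → ℕ)} (hC : A.C = C) (h : A.WeakResetAccept α) :
    A.BuchiAccept α := by
  obtain ⟨k, hk0, hk, hacc, hseg⟩ := h
  rw [hC] at hseg
  intro n
  refine ⟨k (n + 1), n.le_succ.trans hk.le_apply, n.succ_pos.trans_le hk.le_apply, hacc n, ?_⟩
  exact hC ▸ A.vecSum_zero_mem_of_segments α hk0 hk.monotone hseg (n + 1)

theorem weakResetAccept_of_strictMono (A : DetPA Q S d ℕ) (α : ℕ → S) {m : ℕ → ℕ}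
    (hm : StrictMono m) (hm0 : 0 < m 0) (hacc : ∀ i, A.acc (A.stateAt α (m i)))
    (hfirst : A.vecSum α 0 (m 0) ∈ A.C) (hseg : ∀ i, A.vecSum α (m i) (m (i + 1)) ∈ A.C) :
    A.WeakResetAccept α := by
  refine ⟨fun | 0 => 0 | i + 1 => m i, rfl, strictMono_nat_of_lt_succ ?_, hacc, ?_⟩
  · rintro (_ | i)
    exacts [hm0, hm i.lt_succ_self]
  · rintro (_ | i)
    exacts [hfirst, hseg i]

theorem weakResetAccept_of_buchiAccept (A : DetPA Q S d ℕ) (α : ℕ → S)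
    {P : Finset (Fin d → ℕ)} (hC : A.C = LinSet 0 P) (h : A.BuchiAccept α) :
    A.WeakResetAccept α := by
  obtain ⟨φ, hφ, hits⟩ := Filter.extraction_of_frequently_atTop (Filter.frequently_atTop.2 h)
  choose z hz using fun j => hC ▸ (hits j).2.2
  obtain ⟨g, hg⟩ := wellQuasiOrdered_le.exists_monotone_subseq fun j (p : P) => z j p
  have hseg : ∀ i, A.vecSum α (φ (g i)) (φ (g (i + 1))) ∈ LinSet 0 P := fun i => by
    refine mem_linSet_zero_of_add_eq (fun p hp => hg i (i + 1) i.le_succ ⟨p, hp⟩) ?_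
    rw [← zero_add (∑ p ∈ P, _), ← hz, ← zero_add (∑ p ∈ P, _), ← hz]
    exact A.vecSum_add_vecSum α (Nat.zero_le _) (hφ.monotone (g.monotone i.le_succ))
  exact A.weakResetAccept_of_strictMono α (hφ.comp g.strictMono) (hits _).1
    (fun i => (hits _).2.1) (hits _).2.2 (hC ▸ hseg)

end DetPA

theorem buchi_eq_weakReset_of_linear_zero_base_general {Q S : Type} {d : ℕ}
    (A : DetPA Q S d ℕ) (P : Finset (Fin d → ℕ)) (hC : A.C = LinSet 0 P) :
    {α | A.BuchiAccept α} = {α | A.WeakResetAccept α} :=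
  Set.ext fun α => ⟨A.weakResetAccept_of_buchiAccept α hC,
    A.buchiAccept_of_weakResetAccept α (hC.trans (linSet_zero_eq_closure P))⟩

/-- for a deterministic Büchi PA whose constraint set is a single linear
set with base vector `0`, the Büchi and weak reset acceptance conditions coincide. -/
theorem buchi_eq_weakReset_of_linear_zero_base {Q S : Type} [Finite Q] {d : ℕ}
    (A : DetPA Q S d ℕ) (P : Finset (Fin d → ℕ)) (hC : A.C = LinSet 0 P) :
    {α | A.BuchiAccept α} = {α | A.WeakResetAccept α} :=
  buchi_eq_weakReset_of_linear_zero_base_general A P hC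
end
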